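/- arXiv:1202.3949 — 3 statements merged into one kernel-verified Lean document; each statement's English description precedes it below -/
import Mathlib

section
/- Let k be a positive integer and a an integer. If a ≡ 1 (mod rad(k)), then a^(k / rad(k)) ≡ 1 (mod k). -/
/-!
Write `k = rad k * m`. Since `x ^ p - y ^ p = (x - y) * ∑ xⁱ yᵖ⁻¹⁻ⁱ` and the geometric sum is
`≡ p * yᵖ⁻¹` modulo `x - y`, raising to a prime `p` gains a factor `p` in the modulus as
soon as `p` already divides it. Every prime factor of `m` divides `rad k`, so raising `a` to the
primes of `m` one at a time multiplies the modulus `rad k` of `a ≡ 1` by all of `m`.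
-/

/-- The radical of a positive integer: the product of its distinct prime factors. -/
def rad (k : ℕ) : ℕ := ∏ p ∈ k.primeFactors, p

theorem mul_dvd_pow_sub_pow_of_dvd_sub {R : Type*} [CommRing R] {p : ℕ} {n x y : R}
    (hp : (p : R) ∣ n) (h : n ∣ x - y) : (p : R) * n ∣ x ^ p - y ^ p := by
  rw [← geom_sum₂_mul]
  exact mul_dvd_mul (dvd_geom_sum₂_self (hp.trans h)) h

theorem mul_dvd_pow_sub_pow_of_primeFactors_dvd {R : Type*} [CommRing R] {m : ℕ} {n x y : R}
    (hm : ∀ p ∈ m.primeFactors, (p : R) ∣ n) (h : n ∣ x - y) : n * m ∣ x ^ m - y ^ m := by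
  induction m using Nat.recOnMul generalizing n x y with
  | zero => simp
  | one => simpa using h
  | prime p hp =>
    rw [mul_comm]
    exact mul_dvd_pow_sub_pow_of_dvd_sub (hm p (hp.primeFactors ▸ Finset.mem_singleton_self p)) h
  | mul m₁ m₂ ih₁ ih₂ =>
    rcases eq_or_ne m₁ 0 with rfl | hm₁
    · simp
    rcases eq_or_ne m₂ 0 with rfl | hm₂
    · simp
    rw [Nat.primeFactors_mul hm₁ hm₂] at hm
    have h₁ : n * m₁ ∣ x ^ m₁ - y ^ m₁ :=
      ih₁ (fun p hp ↦ hm p (Finset.mem_union_left _ hp)) h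
    have h₂ := ih₂ (fun p hp ↦ (hm p (Finset.mem_union_right _ hp)).mul_right (m₁ : R)) h₁
    simpa [pow_mul, mul_assoc] using h₂

theorem rad_dvd (k : ℕ) : rad k ∣ k :=
  Nat.prod_primeFactors_dvd k

theorem dvd_rad_of_mem_primeFactors {k p : ℕ} (hp : p ∈ k.primeFactors) : p ∣ rad k :=
  Finset.dvd_prod_of_mem _ hp

theorem primeFactors_div_rad_subset (k : ℕ) : (k / rad k).primeFactors ⊆ k.primeFactors := by
  rcases eq_or_ne k 0 with rfl | hk
  · simp
  exact Nat.primeFactors_mono (Nat.div_dvd_of_dvd (rad_dvd k)) hk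

theorem pow_div_radical_congr_one_general (k : ℕ) (a : ℤ)
    (h : a ≡ 1 [ZMOD (rad k : ℤ)]) : a ^ (k / rad k) ≡ 1 [ZMOD (k : ℤ)] := by
  have hfactors : ∀ p ∈ (k / rad k).primeFactors, (p : ℤ) ∣ rad k := fun p hp ↦
    Int.natCast_dvd_natCast.mpr (dvd_rad_of_mem_primeFactors (primeFactors_div_rad_subset k hp))
  have hdvd := mul_dvd_pow_sub_pow_of_primeFactors_dvd hfactors h.symm.dvd
  rw [one_pow, ← Nat.cast_mul, Nat.mul_div_cancel' (rad_dvd k)] at hdvd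
  exact (Int.modEq_iff_dvd.mpr hdvd).symm

/-- If a ≡ 1 (mod rad(k)), then a^(k / rad(k)) ≡ 1 (mod k). -/
theorem pow_div_radical_congr_one (k : ℕ) (hk : 0 < k) (a : ℤ)
    (h : a ≡ 1 [ZMOD (rad k : ℤ)]) : a ^ (k / rad k) ≡ 1 [ZMOD (k : ℤ)] :=
  pow_div_radical_congr_one_general k a h
end

section
/- Let k ≥ 2 be an integer and let a₁, …, a_M be integers. (i) If a_m ≡ 1 (mod rad(k)) for every m, then the product a₁^(k/rad(k)) · a₂^(k/rad(k)) ⋯ a_M^(k/rad(k)) is congruent to 1 modulo k. (ii) If a_m ≡ 0 (mod rad(k)) for at least one index m, then this product is congruent to 0 modulo k. -/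
section PowSubPow

variable {R : Type*} [CommRing R]

theorem mul_natCast_dvd_pow_sub_pow_of_natCast_dvd {p : ℕ} {d x y : R} (hp : (p : R) ∣ d)
    (h : d ∣ x - y) : d * p ∣ x ^ p - y ^ p := by
  rw [← geom_sum₂_mul, mul_comm d]
  exact mul_dvd_mul (dvd_geom_sum₂_self (hp.trans h)) h

theorem mul_natCast_dvd_pow_sub_pow_of_primeFactors_dvd {n : ℕ} {d x y : R}
    (hn : ∀ p ∈ n.primeFactors, (p : R) ∣ d) (h : d ∣ x - y) : d * n ∣ x ^ n - y ^ n := by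
  induction n using Nat.recOnMul generalizing d x y with
  | zero => simp
  | one => simpa using h
  | prime p hp => exact mul_natCast_dvd_pow_sub_pow_of_natCast_dvd (hn p (by simp [hp])) h
  | mul a b iha ihb =>
    rcases eq_or_ne (a * b) 0 with hab | hab
    · simp [hab]
    have hprimes := Nat.primeFactors_mul (left_ne_zero_of_mul hab) (right_ne_zero_of_mul hab)
    have hda : d * a ∣ x ^ a - y ^ a :=
      iha (fun p hp ↦ hn p (hprimes ▸ Finset.mem_union_left _ hp)) h
    have hdab := ihb (fun p hp ↦ (hn p (hprimes ▸ Finset.mem_union_right _ hp)).mul_right _) hda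
    simpa [mul_assoc, ← pow_mul] using hdab

end PowSubPow

theorem div_rad_ne_zero {k : ℕ} (hk : k ≠ 0) : k / rad k ≠ 0 :=
  (Nat.div_ne_zero_iff_of_dvd (rad_dvd k)).mpr ⟨hk, Finset.prod_ne_zero_iff.mpr fun _ hp ↦
    (Nat.prime_of_mem_primeFactors hp).ne_zero⟩

theorem Int.ModEq.pow_div_rad {k : ℕ} {a b : ℤ} (h : a ≡ b [ZMOD (rad k : ℤ)]) :
    a ^ (k / rad k) ≡ b ^ (k / rad k) [ZMOD (k : ℤ)] := by
  rcases eq_or_ne k 0 with rfl | hk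
  · simp
  have hprimes : ∀ p ∈ (k / rad k).primeFactors, (p : ℤ) ∣ (rad k : ℤ) := fun p hp ↦
    Int.natCast_dvd_natCast.mpr <| Finset.dvd_prod_of_mem _ <|
      Nat.primeFactors_mono (Nat.div_dvd_of_dvd (rad_dvd k)) hk hp
  have hdvd := mul_natCast_dvd_pow_sub_pow_of_primeFactors_dvd hprimes h.symm.dvd
  rw [← Nat.cast_mul, Nat.mul_div_cancel' (rad_dvd k)] at hdvd
  exact (Int.modEq_iff_dvd.mpr hdvd).symm

/-- Let k ≥ 2 and a₁, …, a_M be integers.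
(i) If every a_m ≡ 1 (mod rad(k)), then ∏ m, a_m^(k/rad(k)) ≡ 1 (mod k).
(ii) If some a_m ≡ 0 (mod rad(k)), then ∏ m, a_m^(k/rad(k)) ≡ 0 (mod k). -/
theorem prod_pow_div_radical_congr (k : ℕ) (hk : 2 ≤ k) (M : ℕ) (a : Fin M → ℤ) :
    ((∀ m, a m ≡ 1 [ZMOD (rad k : ℤ)]) →
      (∏ m, a m ^ (k / rad k)) ≡ 1 [ZMOD (k : ℤ)]) ∧
    ((∃ m, a m ≡ 0 [ZMOD (rad k : ℤ)]) →
      (∏ m, a m ^ (k / rad k)) ≡ 0 [ZMOD (k : ℤ)]) := by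
  refine ⟨fun h ↦ Int.ModEq.prod_one fun m _ ↦ by simpa using (h m).pow_div_rad, ?_⟩
  rintro ⟨m, hm⟩
  have hfactor : (k : ℤ) ∣ a m ^ (k / rad k) := Int.modEq_zero_iff_dvd.mp <| by
    simpa [div_rad_ne_zero (by omega : k ≠ 0)] using hm.pow_div_rad
  exact Int.modEq_zero_iff_dvd.mpr (hfactor.trans (Finset.dvd_prod_of_mem _ (Finset.mem_univ m)))
end

section
/- Let p be a prime, t ≥ 1 an integer, B an n × n integer matrix, and V₁, …, V_N integer vectors of length n such that p^t divides every entry of B V_j for each j, and such that V₁, …, V_N span the nullspace of B modulo p^t. Let B̄ be the n × (N+n) integer matrix whose j-th column (for 1 ≤ j ≤ N) is B V_j / p^t (entrywise exact division) and whose last n columns form the matrix B; let V̄ be the n × (N+n) integer matrix whose j-th column (for 1 ≤ j ≤ N) is V_j and whose last n columns form p^t times the n × n identity matrix. Suppose the integer vectors z₁, …, z_M of length N+n span the nullspace of B̄ modulo p. Then every integer vector w of length n with B w ≡ 0 (mod p^{t+1}) is congruent modulo p^{t+1} (entrywise) to an integer linear combination of the vectors V̄ z₁, …, V̄ z_M,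 p V₁, …, p V_N. -/
/-!
Since `B w ≡ 0 (mod p^t)`, write `w = ∑ u_j V_j + p^t y`, i.e. `w = V̄ ū` with
`ū = (u, y)`. The block identity `p^t B̄ = B V̄` gives `p^t (B̄ ū) = B w ≡ 0 (mod p^{t+1})`,
so `B̄ ū ≡ 0 (mod p)` and `ū = ∑ c_h z_h + p s`. Hence `w = ∑ c_h V̄ z_h + p V̄ s`, and
`p V̄ s = ∑ s_j (p V_j) + p^{t+1} s'` where `s'` is the last block of `s`.
-/

/-- Integer vectors V₁, …, V_N span the nullspace of B modulo m: every integer vector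
w with B w ≡ 0 (mod m) entrywise is congruent mod m (entrywise) to an integer linear
combination of the V_j. -/
def SpansNullspaceMod {r c N : ℕ} (B : Matrix (Fin r) (Fin c) ℤ)
    (m : ℤ) (V : Fin N → Fin c → ℤ) : Prop :=
  ∀ w : Fin c → ℤ, (∀ i, m ∣ B.mulVec w i) →
    ∃ u : Fin N → ℤ, ∀ i, m ∣ (w - ∑ j, u j • V j) i

open Matrix

theorem SpansNullspaceMod.exists_eq_sum_add_smul {r c N : ℕ} {B : Matrix (Fin r) (Fin c) ℤ}
    {m : ℤ} {V : Fin N → Fin c → ℤ} (hV : SpansNullspaceMod B m V) {w : Fin c → ℤ}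
    (hw : ∀ i, m ∣ (B *ᵥ w) i) :
    ∃ (u : Fin N → ℤ) (y : Fin c → ℤ), w = ∑ j, u j • V j + m • y := by
  obtain ⟨u, hu⟩ := hV w hw
  choose y hy using hu
  exact ⟨u, y, sub_eq_iff_eq_add'.mp (funext hy)⟩

namespace Matrix

variable {R ι : Type*} {N n : ℕ}

theorem mulVec_of_addCases [NonUnitalNonAssocSemiring R] (A : Matrix ι (Fin N) R)
    (C : Matrix ι (Fin n) R) (v : Fin (N + n) → R) :
    (of fun i j => Fin.addCases (A i) (C i) j) *ᵥ v
      = A *ᵥ (v ∘ Fin.castAdd n) + C *ᵥ (v ∘ Fin.natAdd N) := by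
  ext i
  simp [mulVec, dotProduct, Fin.sum_univ_add]

theorem mulVec_of_cols [CommSemiring R] (V : Fin N → ι → R) (u : Fin N → R) :
    (of fun i j => V j i) *ᵥ u = ∑ j, u j • V j :=
  (mulVec_transpose (of V) u).trans (vecMul_eq_sum u (of V))

theorem mulVec_of_ite_eq [Fintype ι] [DecidableEq ι] [NonUnitalNonAssocSemiring R] (q : R)
    (v : ι → R) : (of fun i j => if i = j then q else 0) *ᵥ v = q • v := by
  ext i
  exact mulVec_diagonal (fun _ => q) v i

end Matrix

section LiftedMatrices

variable {n N : ℕ} (V : Fin N → Fin n → ℤ) (q : ℤ)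

theorem mulVec_cols_append_scalar (v : Fin (N + n) → ℤ) :
    (of fun i j => Fin.addCases (fun j₁ => V j₁ i) (fun j₂ => if i = j₂ then q else 0) j)
        *ᵥ v = ∑ j, v (Fin.castAdd n j) • V j + q • (v ∘ Fin.natAdd N) := by
  refine (mulVec_of_addCases (of fun i j => V j i)
    (of fun i j => if i = j then q else 0) v).trans ?_
  rw [mulVec_of_cols, mulVec_of_ite_eq]
  rfl

theorem smul_cols_ediv_append_eq_mul (B : Matrix (Fin n) (Fin n) ℤ)
    (hV : ∀ j i, q ∣ (B *ᵥ V j) i) :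
    q • (of fun i j => Fin.addCases (fun j₁ => (B *ᵥ V j₁) i / q) (fun j₂ => B i j₂) j :
        Matrix (Fin n) (Fin (N + n)) ℤ)
      = B * (of fun i j =>
          Fin.addCases (fun j₁ => V j₁ i) (fun j₂ => if i = j₂ then q else 0) j :
        Matrix (Fin n) (Fin (N + n)) ℤ) := by
  ext i j
  simp only [mul_apply, Matrix.smul_apply, of_apply, smul_eq_mul]
  refine Fin.addCases (fun j₁ => ?_) (fun j₂ => ?_) j
  · simpa [mulVec, dotProduct] using Int.mul_ediv_cancel' (hV j₁ i)
  · simp [mul_comm]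

end LiftedMatrices

theorem nullspace_lifting_general (p : ℕ) (hp : p.Prime) (t : ℕ)
    (n N M : ℕ) (B : Matrix (Fin n) (Fin n) ℤ) (V : Fin N → Fin n → ℤ)
    (hVdvd : ∀ j i, (p : ℤ) ^ t ∣ B.mulVec (V j) i)
    (hVspan : SpansNullspaceMod B ((p : ℤ) ^ t) V)
    (Bbar : Matrix (Fin n) (Fin (N + n)) ℤ)
    (hBbar : Bbar = Matrix.of fun i j =>
      Fin.addCases (fun j₁ => B.mulVec (V j₁) i / (p : ℤ) ^ t) (fun j₂ => B i j₂) j)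
    (Vbar : Matrix (Fin n) (Fin (N + n)) ℤ)
    (hVbar : Vbar = Matrix.of fun i j =>
      Fin.addCases (fun j₁ => V j₁ i) (fun j₂ => if i = j₂ then (p : ℤ) ^ t else 0) j)
    (z : Fin M → Fin (N + n) → ℤ)
    (hzspan : SpansNullspaceMod Bbar (p : ℤ) z) :
    ∀ w : Fin n → ℤ, (∀ i, (p : ℤ) ^ (t + 1) ∣ B.mulVec w i) →
      ∃ (c : Fin M → ℤ) (d : Fin N → ℤ),
        ∀ i, (p : ℤ) ^ (t + 1) ∣
          (w - ((∑ h, c h • Vbar.mulVec (z h)) + ∑ j, d j • ((p : ℤ) • V j))) i := by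
  intro w hw
  have hVbar_mulVec := hVbar ▸ mulVec_cols_append_scalar V ((p : ℤ) ^ t)
  have hBbar_eq : (p : ℤ) ^ t • Bbar = B * Vbar := by
    rw [hBbar, hVbar]
    exact smul_cols_ediv_append_eq_mul V _ B hVdvd
  obtain ⟨u, y, hwuy⟩ :=
    hVspan.exists_eq_sum_add_smul fun i => (pow_dvd_pow _ t.le_succ).trans (hw i)
  have hw_eq : w = Vbar *ᵥ Fin.addCases u y := by
    simpa [hVbar_mulVec, Function.comp_def] using hwuy
  have hBbar_dvd : ∀ i, (p : ℤ) ∣ (Bbar *ᵥ Fin.addCases u y) i := fun i => by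
    have hq : (p : ℤ) ^ t ≠ 0 := pow_ne_zero t (Int.natCast_ne_zero.mpr hp.ne_zero)
    have := hw i
    rw [hw_eq, mulVec_mulVec, ← hBbar_eq, smul_mulVec, Pi.smul_apply, pow_succ] at this
    exact (mul_dvd_mul_iff_left hq).mp this
  obtain ⟨c, s, hs⟩ := hzspan.exists_eq_sum_add_smul hBbar_dvd
  refine ⟨c, fun j => s (Fin.castAdd n j), fun i => ?_⟩
  have hrem : w - (∑ h, c h • Vbar *ᵥ z h + ∑ j, s (Fin.castAdd n j) • (p : ℤ) • V j)
      = (p : ℤ) ^ (t + 1) • (s ∘ Fin.natAdd N) := by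
    rw [hw_eq, hs]
    simp only [mulVec_add, mulVec_sum, mulVec_smul, hVbar_mulVec s, smul_add, Finset.smul_sum,
      smul_comm (p : ℤ), pow_succ', mul_smul]
    abel
  rw [hrem]
  exact Dvd.intro _ rfl

/-- If V₁, …, V_N span the nullspace of B mod p^t, and z₁, …, z_M span
the nullspace of B̄ = [ B V₁/p^t ⋯ B V_N/p^t | B ] mod p, then every w with
B w ≡ 0 (mod p^{t+1}) is congruent mod p^{t+1} to an integer linear combination of
V̄ z₁, …, V̄ z_M, p V₁, …, p V_N, where V̄ = [ V₁ ⋯ V_N | p^t I ]. -/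
theorem nullspace_lifting (p : ℕ) (hp : p.Prime) (t : ℕ) (ht : 1 ≤ t)
    (n N M : ℕ) (B : Matrix (Fin n) (Fin n) ℤ) (V : Fin N → Fin n → ℤ)
    (hVdvd : ∀ j i, (p : ℤ) ^ t ∣ B.mulVec (V j) i)
    (hVspan : SpansNullspaceMod B ((p : ℤ) ^ t) V)
    (Bbar : Matrix (Fin n) (Fin (N + n)) ℤ)
    (hBbar : Bbar = Matrix.of fun i j =>
      Fin.addCases (fun j₁ => B.mulVec (V j₁) i / (p : ℤ) ^ t) (fun j₂ => B i j₂) j)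
    (Vbar : Matrix (Fin n) (Fin (N + n)) ℤ)
    (hVbar : Vbar = Matrix.of fun i j =>
      Fin.addCases (fun j₁ => V j₁ i) (fun j₂ => if i = j₂ then (p : ℤ) ^ t else 0) j)
    (z : Fin M → Fin (N + n) → ℤ)
    (hzspan : SpansNullspaceMod Bbar (p : ℤ) z) :
    ∀ w : Fin n → ℤ, (∀ i, (p : ℤ) ^ (t + 1) ∣ B.mulVec w i) →
      ∃ (c : Fin M → ℤ) (d : Fin N → ℤ),
        ∀ i, (p : ℤ) ^ (t + 1) ∣
          (w - ((∑ h, c h • Vbar.mulVec (z h)) + ∑ j, d j • ((p : ℤ) • V j))) i :=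
  nullspace_lifting_general p hp t n N M B V hVdvd hVspan Bbar hBbar Vbar hVbar z hzspan
end
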